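/- Let k = 𝔽_q be a finite field, r ≥ 1, e ≥ 1 a divisor of q − 1, g ∈ k_r[X], f(X) = g(X^{(q−1)/e}), and χ : kˣ → ℂ a multiplicative character extended by zero to all of k. Then ∑_{x ∈ k_r} χ(N(f(x))) = χ(N(g(0))) + ((q−1)/e) · ∑_{μ ∈ kˣ, μ^e = 1} ∑_{x ∈ k_rˣ, N(x) = μ} χ(N(g(x))). -/

import Mathlib

/-!
Put `d = (q - 1) / e` and `F y = χ (N (g y))`, so the left side is `∑ x, F (x ^ d)`. The term
`x = 0` gives `F 0`. On the cyclic group `k_rˣ` of order `q ^ r - 1`, the map `x ↦ x ^ d` is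
`d`-to-one onto the subgroup of elements killed by `(q ^ r - 1) / d = e (q ^ r - 1) / (q - 1)`.
As `N y = y ^ ((q ^ r - 1) / (q - 1))`, these are exactly the `y` with `N y ^ e = 1`, and
grouping them by `μ = N y` gives the double sum.
-/

open Finset

theorem MonoidHom.sum_comp_eq_card_ker_nsmul {G H M : Type*} [Group G] [Fintype G] [Group H]
    [DecidableEq H] [AddCommMonoid M] (φ : G →* H) (F : H → M) :
    ∑ x, F (φ x) = Nat.card φ.ker • ∑ y ∈ univ.image φ, F y := by
  classical
  rw [Finset.sum_comp, smul_sum]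
  refine sum_congr rfl fun y hy => ?_
  obtain ⟨x, -, rfl⟩ := mem_image.mp hy
  congr 1
  rw [card_fiber_eq_of_mem_range φ ⟨x, rfl⟩ ⟨1, map_one φ⟩, Nat.card_eq_fintype_card,
    Fintype.card_subtype]
  simp only [mem_ker]

theorem IsCyclic.range_powMonoidHom_eq_ker {G : Type*} [CommGroup G] [IsCyclic G] [Finite G]
    {d : ℕ} (hd : d ∣ Nat.card G) :
    (powMonoidHom d : G →* G).range = (powMonoidHom (Nat.card G / d)).ker := by
  refine Subgroup.eq_of_le_of_card_ge ?_ ?_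
  · rintro _ ⟨x, rfl⟩
    simp [← pow_mul, Nat.mul_div_cancel' hd, pow_card_eq_one']
  · rw [card_powMonoidHom_range, card_powMonoidHom_ker, Nat.gcd_eq_right hd,
      Nat.gcd_eq_right (Nat.div_dvd_of_dvd hd)]

theorem IsCyclic.sum_comp_pow {G M : Type*} [CommGroup G] [IsCyclic G] [Fintype G]
    [DecidableEq G] [AddCommMonoid M] {d : ℕ} (hd : d ∣ Nat.card G) (F : G → M) :
    ∑ x, F (x ^ d) = d • ∑ y with y ^ (Nat.card G / d) = 1, F y := by
  have hker : Nat.card (powMonoidHom d : G →* G).ker = d := by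
    rw [card_powMonoidHom_ker, Nat.gcd_eq_right hd]
  have himage : univ.image (powMonoidHom d : G →* G) =
      ({y | y ^ (Nat.card G / d) = 1} : Finset G) := by
    ext y
    simpa using SetLike.ext_iff.mp (range_powMonoidHom_eq_ker hd) y
  calc ∑ x, F (x ^ d) = ∑ x, F (powMonoidHom d x) := rfl
    _ = d • ∑ y with y ^ (Nat.card G / d) = 1, F y :=
      ((powMonoidHom d).sum_comp_eq_card_ker_nsmul F).trans (by rw [hker, himage])

theorem Fintype.sum_eq_add_sum_units {K M : Type*} [GroupWithZero K] [Fintype K] [DecidableEq K]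
    [AddCommMonoid M] (F : K → M) : ∑ x, F x = F 0 + ∑ x : Kˣ, F x := by
  rw [sum_eq_add_sum_subtype_ne F 0]
  congr 1
  exact (sum_equiv unitsEquivNeZero _ _ fun _ => rfl).symm

theorem Nat.div_div_eq_mul_div_of_dvd {a b e : ℕ} (hea : e ∣ a) (hab : a ∣ b) (ha : a ≠ 0) :
    b / (a / e) = e * (b / a) := by
  obtain ⟨d, rfl⟩ := hea
  obtain ⟨m, rfl⟩ := hab
  have he : 0 < e := pos_of_ne_zero (left_ne_zero_of_mul ha)
  have hd : 0 < d := pos_of_ne_zero (right_ne_zero_of_mul ha)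
  rw [Nat.mul_div_cancel_left d he, Nat.mul_div_cancel_left m (pos_of_ne_zero ha), mul_comm e d,
    mul_assoc, Nat.mul_div_cancel_left _ hd]

namespace FiniteField

section Finite

variable {k K : Type*} [Field k] [Field K] [Algebra k K] [Finite K]

theorem card_sub_one_dvd_card_sub_one : Nat.card k - 1 ∣ Nat.card K - 1 := by
  rw [Module.natCard_eq_pow_finrank (K := k) (V := K)]
  exact Nat.sub_one_dvd_pow_sub_one _ _

theorem norm_pow_eq_one_iff (e : ℕ) (x : Kˣ) :
    Algebra.norm k (x : K) ^ e = 1 ↔ x ^ (e * ((Nat.card K - 1) / (Nat.card k - 1))) = 1 := by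
  rw [← (algebraMap k K).injective.eq_iff, map_pow, algebraMap_norm_eq_pow, map_one, ← pow_mul,
    mul_comm, Units.ext_iff]
  simp

end Finite

variable {k K M : Type*} [Field k] [Fintype k] [Field K] [Fintype K] [Algebra k K]
  [AddCommMonoid M]

open scoped Classical

theorem sum_fiberwise_norm_of_pow_eq_one (e : ℕ) (F : K → M) :
    ∑ μ ∈ univ.filter (fun μ : kˣ => μ ^ e = 1),
        ∑ x ∈ univ.filter (fun x : Kˣ => Algebra.norm k (x : K) = μ), F (x : K) =
      ∑ x ∈ univ.filter (fun x : Kˣ => Algebra.norm k (x : K) ^ e = 1), F (x : K) := by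
  let ν : Kˣ →* kˣ := Units.map (Algebra.norm k)
  calc _ = ∑ μ ∈ univ.filter (fun μ : kˣ => μ ^ e = 1),
        ∑ x ∈ univ.filter (fun x : Kˣ => ν x = μ), F (x : K) := by
        simp only [ν, Units.ext_iff, Units.coe_map]
    _ = _ := by
        rw [sum_fiberwise_eq_sum_filter]
        simp [ν, Units.ext_iff]

theorem sum_comp_pow_eq_add_nsmul_sum_norm {e : ℕ} (he : e ∣ Nat.card k - 1) (F : K → M) :
    ∑ x : K, F (x ^ ((Nat.card k - 1) / e)) =
      F 0 + ((Nat.card k - 1) / e) •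
        ∑ μ ∈ univ.filter (fun μ : kˣ => μ ^ e = 1),
          ∑ x ∈ univ.filter (fun x : Kˣ => Algebra.norm k (x : K) = μ), F (x : K) := by
  set d := (Nat.card k - 1) / e
  have hk : 0 < Nat.card k - 1 := Nat.sub_pos_of_lt Finite.one_lt_card
  have hd : 0 < d := Nat.div_pos (Nat.le_of_dvd hk he) (Nat.pos_of_dvd_of_pos he hk)
  have hdK : d ∣ Nat.card Kˣ :=
    (Nat.div_dvd_of_dvd he).trans (Nat.card_units K ▸ card_sub_one_dvd_card_sub_one)
  have hexp : Nat.card Kˣ / d = e * ((Nat.card K - 1) / (Nat.card k - 1)) := by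
    rw [Nat.card_units]
    exact Nat.div_div_eq_mul_div_of_dvd he card_sub_one_dvd_card_sub_one hk.ne'
  calc ∑ x : K, F (x ^ d) = F 0 + ∑ x : Kˣ, F ↑(x ^ d) := by
        rw [Fintype.sum_eq_add_sum_units, zero_pow hd.ne']
        simp only [Units.val_pow_eq_pow_val]
    _ = F 0 + d • ∑ y : Kˣ with y ^ (Nat.card Kˣ / d) = 1, F y := by
        rw [IsCyclic.sum_comp_pow hdK fun y : Kˣ => F y]
    _ = _ := by
        simp only [sum_fiberwise_norm_of_pow_eq_one, hexp, norm_pow_eq_one_iff]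

end FiniteField

open Polynomial

open scoped Classical in
theorem stmt5_general {k K : Type*} [Field k] [Fintype k] [Field K] [Fintype K] [Algebra k K]
    (q e : ℕ) (hq : Fintype.card k = q)
    (hdvd : e ∣ q - 1)
    (g f : Polynomial K) (hf : f = g.comp (X ^ ((q - 1) / e)))
    (χ : MulChar k ℂ) :
    ∑ x : K, χ (Algebra.norm k (f.eval x)) =
      χ (Algebra.norm k (g.eval 0)) +
        (((q - 1) / e : ℕ) : ℂ) *
          ∑ μ ∈ Finset.univ.filter (fun μ : kˣ => μ ^ e = 1),
            ∑ x ∈ Finset.univ.filter (fun x : Kˣ => Algebra.norm k (x : K) = (μ : k)),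
              χ (Algebra.norm k (g.eval (x : K))) := by
  subst hf hq
  rw [Fintype.card_eq_nat_card] at hdvd ⊢
  simp only [eval_comp, eval_pow, eval_X]
  simpa only [nsmul_eq_mul] using
    FiniteField.sum_comp_pow_eq_add_nsmul_sum_norm hdvd fun y => χ (Algebra.norm k (g.eval y))

open scoped Classical in
/-- For `f(X) = g(X^{(q−1)/e})`,
`∑_{x ∈ k_r} χ(N(f(x))) = χ(N(g(0))) + ((q−1)/e) ∑_{μ^e = 1} ∑_{N(x) = μ} χ(N(g(x)))`. -/
theorem stmt5 {k K : Type*} [Field k] [Fintype k] [Field K] [Fintype K] [Algebra k K]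
    (q r e : ℕ) (hq : Fintype.card k = q) (hr : 1 ≤ r) (hK : Fintype.card K = q ^ r)
    (he : 1 ≤ e) (hdvd : e ∣ q - 1)
    (g f : Polynomial K) (hf : f = g.comp (X ^ ((q - 1) / e)))
    (χ : MulChar k ℂ) :
    ∑ x : K, χ (Algebra.norm k (f.eval x)) =
      χ (Algebra.norm k (g.eval 0)) +
        (((q - 1) / e : ℕ) : ℂ) *
          ∑ μ ∈ Finset.univ.filter (fun μ : kˣ => μ ^ e = 1),
            ∑ x ∈ Finset.univ.filter (fun x : Kˣ => Algebra.norm k (x : K) = (μ : k)),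
              χ (Algebra.norm k (g.eval (x : K))) :=
  stmt5_general q e hq hdvd g f hf χ
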